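/- Let E be a low-defect expression with associated low-defect tree T (with root v₀) and associated low-defect polynomial f, and for each non-root vertex v of T let x_v denote the variable of E corresponding to v. Then for any subset S of the non-root vertices of T, the monomial ∏_{v∈S} x_v appears in f with nonzero coefficient if and only if the subgraph of T induced by S ∪ {v₀} is a subtree of T (i.e., is connected); and in that case its coefficient equals (∏_{v ∈ S∪{v₀}} w(v)) · (∏_{e an edge of T with exactly one endpoint in S∪{v₀}} w(e)), where w denotes the label. In particular, the constant term of f corresponds to S = ∅ and the leading term to S = all non-root vertices. -/

import Mathlib

/-- `CpxW n k` : the positive integer `n` can be written using exactly `k` ones,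
with an arbitrary combination of additions and multiplications. -/
inductive CpxW : ℕ → ℕ → Prop
  | one : CpxW 1 1
  | add {a b m n : ℕ} : CpxW a m → CpxW b n → CpxW (a + b) (m + n)
  | mul {a b m n : ℕ} : CpxW a m → CpxW b n → CpxW (a * b) (m + n)

/-- The integer complexity `‖n‖`. -/
noncomputable def cpx (n : ℕ) : ℕ := sInf {k | CpxW n k}

/-- Low-defect expressions: built from positive integer constants (rule `const`,
positivity recorded in `LDE.WF`), products (rule `mul`, disjointness of the
variables recorded in `LDE.WF`) and `E·x + c` (rule `step`, freshness of `x`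
recorded in `LDE.WF`).  Variables are indexed by natural numbers. -/
inductive LDE : Type
  | const (n : ℕ) : LDE
  | mul (E₁ E₂ : LDE) : LDE
  | step (E : LDE) (x : ℕ) (c : ℕ) : LDE

/-- The set of variables used by a low-defect expression. -/
def LDE.vars : LDE → Finset ℕ
  | .const _ => ∅
  | .mul E₁ E₂ => E₁.vars ∪ E₂.vars
  | .step E x _ => insert x E.vars

/-- Well-formedness of a low-defect expression: constants are positive, the two
factors of a product use disjoint sets of variables, and the variable of
`E·x + c` does not occur in `E`. -/
def LDE.WF : LDE → Prop
  | .const n => 0 < n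
  | .mul E₁ E₂ => E₁.WF ∧ E₂.WF ∧ Disjoint E₁.vars E₂.vars
  | .step E x c => E.WF ∧ x ∉ E.vars ∧ 0 < c

/-- The polynomial obtained by evaluating a low-defect expression. -/
noncomputable def LDE.poly : LDE → MvPolynomial ℕ ℤ
  | .const n => MvPolynomial.C (n : ℤ)
  | .mul E₁ E₂ => E₁.poly * E₂.poly
  | .step E x c => E.poly * MvPolynomial.X x + MvPolynomial.C (c : ℤ)

/-- The complexity `‖E‖` of a low-defect expression. -/
noncomputable def LDE.cpx : LDE → ℕ
  | .const n => _root_.cpx n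
  | .mul E₁ E₂ => E₁.cpx + E₂.cpx
  | .step E _ c => E.cpx + _root_.cpx c

/-- Low-defect trees: rooted trees whose vertices and edges are labeled by
natural numbers (positivity of the labels is recorded in `LDT.Pos`); a node
carries its label together with the list of its subtrees, each with the label of
the corresponding edge. -/
inductive LDT : Type
  | node (label : ℕ) (children : List (ℕ × LDT)) : LDT

/-- The label of the root. -/
def LDT.label : LDT → ℕ | .node n _ => n

/-- The children (edge label, subtree) of the root. -/
def LDT.children : LDT → List (ℕ × LDT) | .node _ cs => cs

mutual
/-- All labels of a low-defect tree are positive. -/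
def LDT.Pos : LDT → Prop
  | .node n cs => 0 < n ∧ LDT.PosAux cs

def LDT.PosAux : List (ℕ × LDT) → Prop
  | [] => True
  | c :: cs => 0 < c.1 ∧ c.2.Pos ∧ LDT.PosAux cs
end

/-- Isomorphism of labeled rooted trees: a root-preserving, label-preserving
graph isomorphism; concretely, the root labels agree and the children lists
match up to a permutation, recursively. -/
inductive LDT.Iso : LDT → LDT → Prop
  | node (n : ℕ) (cs₁ cs₂ : List (ℕ × LDT)) (σ : Fin cs₁.length ≃ Fin cs₂.length)
      (hlab : ∀ i : Fin cs₁.length, (cs₁.get i).1 = (cs₂.get (σ i)).1)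
      (hiso : ∀ i : Fin cs₁.length, LDT.Iso (cs₁.get i).2 (cs₂.get (σ i)).2) :
      LDT.Iso (.node n cs₁) (.node n cs₂)

/-- The low-defect tree `T(E)` associated to a low-defect expression `E`. -/
def LDE.tree : LDE → LDT
  | .const n => .node n []
  | .step E _ c => .node 1 [(c, E.tree)]
  | .mul E₁ E₂ => .node (E₁.tree.label * E₂.tree.label) (E₁.tree.children ++ E₂.tree.children)

/-- The subtree of a low-defect tree at a position (a path from the root, given
by the list of child indices); `none` if there is no such vertex. -/
def LDT.sub? : LDT → List ℕ → Option LDT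
  | t, [] => some t
  | t, i :: p =>
    match t.children[i]? with
    | some c => LDT.sub? c.2 p
    | none => none

/-- `p` is a vertex of `t` (vertices are encoded by their positions). -/
def LDT.IsVert (t : LDT) (p : List ℕ) : Prop := (t.sub? p).isSome

/-- The label of the vertex at position `p` (junk value `1` if `p` is not a
vertex). -/
def LDT.labelAt (t : LDT) (p : List ℕ) : ℕ := ((t.sub? p).map LDT.label).getD 1

/-- The list of children at position `p`. -/
def LDT.childrenAt (t : LDT) (p : List ℕ) : List (ℕ × LDT) :=
  ((t.sub? p).map LDT.children).getD []

/-- The label of the edge joining the non-root vertex at position `q` to its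
parent (junk value `1` if there is no such edge). -/
def LDT.edgeLabelAt (t : LDT) (q : List ℕ) : ℕ :=
  (((t.sub? q.dropLast).bind (fun s => s.children[q.getLast?.getD 0]?)).map
    Prod.fst).getD 1

mutual
/-- The list of all positions (vertices) of a low-defect tree. -/
def LDT.positions : LDT → List (List ℕ)
  | .node _ cs => [] :: LDT.positionsAux 0 cs

def LDT.positionsAux : ℕ → List (ℕ × LDT) → List (List ℕ)
  | _, [] => []
  | i, c :: cs => (c.2.positions.map (i :: ·)) ++ LDT.positionsAux (i + 1) cs
end

/-- The finite set of vertices (positions) of a low-defect tree. -/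
def LDT.vertFinset (t : LDT) : Finset (List ℕ) := t.positions.toFinset

/-- The finite set of edges of a low-defect tree, an edge being encoded by the
position of its lower (non-root) endpoint. -/
def LDT.edgeFinset (t : LDT) : Finset (List ℕ) := t.positions.toFinset.erase []

/-- The variable of `E` corresponding to the non-root vertex of `T(E)` at a given
position, under the canonical bijection between variables of `E` and non-root
vertices of `T(E)`. -/
def LDE.varAt : LDE → List ℕ → Option ℕ
  | .const _, _ => none
  | .step E x _, p =>
    match p with
    | 0 :: p' => if p' = [] then some x else E.varAt p'
    | _ => none
  | .mul E₁ E₂, p =>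
    match p with
    | i :: p' =>
      if i < E₁.tree.children.length then E₁.varAt (i :: p')
      else E₂.varAt ((i - E₁.tree.children.length) :: p')
    | [] => none

/-- The position of the non-root vertex of `T(E)` corresponding to a variable of
`E`, under the canonical bijection. -/
def LDE.posOf : LDE → ℕ → Option (List ℕ)
  | .const _, _ => none
  | .step E v _, x => if x = v then some [0] else (E.posOf x).map (0 :: ·)
  | .mul E₁ E₂, x =>
    match E₁.posOf x with
    | some p => some p
    | none => (E₂.posOf x).map (fun p =>
        match p with
        | i :: p' => (i + E₁.tree.children.length) :: p'
        | [] => [])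

/-- Adjacency within a set `S` of positions: both endpoints lie in `S` and one is
the parent of the other. -/
def AdjIn (S : Set (List ℕ)) (u v : List ℕ) : Prop :=
  u ∈ S ∧ v ∈ S ∧ ((∃ i, v = u ++ [i]) ∨ (∃ i, u = v ++ [i]))

/-- The subgraph induced by a set `S` of positions is connected. -/
def ConnectedIn (S : Set (List ℕ)) : Prop :=
  ∀ u ∈ S, ∀ v ∈ S, Relation.ReflTransGen (AdjIn S) u v


/-!
Induct on the expression. For a product `E₁·E₂`, the monomial of `S` splits into the parts
on the two factors; as their variables are disjoint, its coefficient is the product of the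
two coefficients. On the tree side, no edge joins the two halves of the merged root, so
`S ∪ {root}` is connected iff both halves are, and the weight factors accordingly.
For `E·x + c`, if the old root (the variable `x`) lies in `S`, the coefficient is that of
the rest of `S` in `E`; the new root, labelled `1`, is a leaf attached to the old one by an
edge inside the subtree, so neither connectivity nor the weight changes. Otherwise the monomial avoids
`x`, so only the constant `c` can contribute; and indeed `{root}` is then the only connected
choice, with weight `1 · c`. Finally the weight is nonzero because all labels are positive.
-/

lemma MvPolynomial.coeff_mul_of_disjoint_vars {σ R : Type*} [CommSemiring R]
    {p q : MvPolynomial σ R} {A B : Finset σ} (hp : p.vars ⊆ A) (hq : q.vars ⊆ B)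
    (hAB : Disjoint A B) {m n : σ →₀ ℕ} (hm : m.support ⊆ A) (hn : n.support ⊆ B) :
    (p * q).coeff (m + n) = p.coeff m * q.coeff n := by
  classical
  rw [coeff_mul]
  refine Finset.sum_eq_single (m, n) (fun ⟨a, b⟩ hab hne => ?_) (fun h => by simp at h)
  by_contra hab0
  dsimp only at hab0
  have ha := (support_subset_vars_of_mem_support
    (mem_support_iff.mpr (left_ne_zero_of_mul hab0))).trans hp
  have hb := (support_subset_vars_of_mem_support
    (mem_support_iff.mpr (right_ne_zero_of_mul hab0))).trans hq
  have eq_zero : ∀ {f : σ →₀ ℕ} {X : Finset σ} {i : σ}, f.support ⊆ X → i ∉ X → f i = 0 :=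
    fun hf hi => Finsupp.notMem_support_iff.mp fun h => hi (hf h)
  -- `a + b = m + n` splits coordinatewise, since `a, m` live on `A` and `b, n` on `B`
  have key : ∀ i, a i = m i ∧ b i = n i := fun i => by
    have hsum : a i + b i = m i + n i := by
      simpa using DFunLike.congr_fun (Finset.HasAntidiagonal.mem_antidiagonal.mp hab) i
    by_cases hi : i ∈ A
    · have hiB := Finset.disjoint_left.mp hAB hi
      have := eq_zero hb hiB
      have := eq_zero hn hiB
      omega
    · have := eq_zero ha hi
      have := eq_zero hm hi
      omega
  exact hne (Prod.ext (Finsupp.ext fun i => (key i).1) (Finsupp.ext fun i => (key i).2))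

lemma Finsupp.support_sum_single_one_subset {ι : Type*} {S : Finset ι} {xv : ι → ℕ}
    {V : Finset ℕ} (h : ∀ p ∈ S, xv p ∈ V) :
    (∑ p ∈ S, Finsupp.single (xv p) 1).support ⊆ V := by
  refine Finsupp.support_finsetSum.trans (Finset.biUnion_subset.mpr fun p hp => ?_)
  exact Finsupp.support_single_subset.trans (Finset.singleton_subset_iff.mpr (h p hp))

lemma Finsupp.sum_single_one_eq_zero_iff {ι : Type*} {S : Finset ι} {xv : ι → ℕ} :
    ∑ p ∈ S, Finsupp.single (xv p) 1 = 0 ↔ S = ∅ := by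
  simp [Finset.sum_eq_zero_iff, Finset.eq_empty_iff_forall_notMem]

namespace List

lemma modifyHead_add_injective (k : ℕ) : Function.Injective (modifyHead (· + k)) := by
  intro u v h
  rcases u with _ | ⟨a, u⟩ <;> rcases v with _ | ⟨b, v⟩ <;> simp_all

end List

lemma disjoint_image_modifyHead_add {k : ℕ} {X Y : Finset (List ℕ)}
    (hX : ∀ p ∈ X, ∃ j q, p = j :: q ∧ j < k) (hY : [] ∉ Y) :
    Disjoint X (Y.image (List.modifyHead (· + k))) := by
  refine Finset.disjoint_left.mpr fun p hp hpY => ?_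
  obtain ⟨j, q, rfl, hj⟩ := hX p hp
  obtain ⟨_ | ⟨a, r⟩, hr, h⟩ := Finset.mem_image.mp hpY
  · exact hY hr
  · simp only [List.modifyHead_cons, List.cons.injEq] at h
    omega

lemma exists_eq_union_image_modifyHead_add (k : ℕ) {S : Finset (List ℕ)} (hS : [] ∉ S) :
    ∃ S₁ S₂ : Finset (List ℕ), S = S₁ ∪ S₂.image (List.modifyHead (· + k)) ∧
      (∀ p ∈ S₁, ∃ j q, p = j :: q ∧ j < k) ∧ [] ∉ S₂ := by
  have hinj := List.modifyHead_add_injective k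
  refine ⟨S.filter (·.headI < k), S.preimage _ hinj.injOn, ?_, ?_, by simpa using hS⟩
  · ext p
    simp only [Finset.mem_union, Finset.mem_filter, Finset.mem_image, Finset.mem_preimage]
    constructor
    · intro hp
      rcases p with _ | ⟨j, q⟩
      · exact absurd hp hS
      by_cases hj : j < k
      · exact Or.inl ⟨hp, hj⟩
      · refine Or.inr ⟨(j - k) :: q, ?_, ?_⟩ <;> simp [Nat.sub_add_cancel (not_lt.mp hj), hp]
    · rintro (⟨hp, -⟩ | ⟨r, hr, rfl⟩) <;> assumption
  · intro p hp
    obtain ⟨hp, hpk⟩ := Finset.mem_filter.mp hp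
    rcases p with _ | ⟨j, q⟩
    · exact absurd hp hS
    · exact ⟨j, q, rfl, hpk⟩

lemma mem_insert_nil_union_image_iff {k : ℕ} {S₁ S₂ : Finset (List ℕ)} (hS₂ : [] ∉ S₂)
    {r : List ℕ} (hr : ∀ j ∈ r.head?, j < k) :
    r ∈ insert [] (S₁ ∪ S₂.image (List.modifyHead (· + k))) ↔ r ∈ insert [] S₁ := by
  simp only [Finset.mem_insert, Finset.mem_union]
  refine or_congr_right (or_iff_left fun hrS₂ => ?_)
  obtain ⟨_ | ⟨a, r'⟩, hr', rfl⟩ := Finset.mem_image.mp hrS₂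
  · exact hS₂ hr'
  · simp at hr

lemma modifyHead_mem_insert_nil_union_image_iff {k : ℕ} {S₁ S₂ : Finset (List ℕ)}
    (hS₁ : ∀ p ∈ S₁, ∃ j q, p = j :: q ∧ j < k) (r : List ℕ) :
    r.modifyHead (· + k) ∈ insert [] (S₁ ∪ S₂.image (List.modifyHead (· + k))) ↔
      r ∈ insert [] S₂ := by
  rcases r with _ | ⟨a, r⟩
  · simp
  have hS₁r : (a :: r).modifyHead (· + k) ∉ S₁ := fun h => by
    obtain ⟨j, q, hjq, hj⟩ := hS₁ _ h
    simp only [List.modifyHead_cons, List.cons.injEq] at hjq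
    omega
  simp only [Finset.mem_insert, Finset.mem_union, hS₁r, false_or]
  rw [(List.modifyHead_add_injective k).mem_finset_image]
  simp

def IsTreeAdj (u v : List ℕ) : Prop :=
  (∃ i, v = u ++ [i]) ∨ (∃ i, u = v ++ [i])

section Connectivity

open Relation

lemma IsTreeAdj.symm {u v : List ℕ} (h : IsTreeAdj u v) : IsTreeAdj v u := Or.symm h

lemma not_isTreeAdj_self (u : List ℕ) : ¬ IsTreeAdj u u := by
  rintro (⟨i, h⟩ | ⟨i, h⟩) <;> simpa using congrArg List.length h

lemma isTreeAdj_nil_iff {v : List ℕ} : IsTreeAdj [] v ↔ ∃ i, v = [i] := by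
  simp [IsTreeAdj]

lemma IsTreeAdj.head_eq {j l : ℕ} {u v : List ℕ} (h : IsTreeAdj (j :: u) (l :: v)) : j = l := by
  rcases h with ⟨i, h⟩ | ⟨i, h⟩ <;> simp_all

lemma isTreeAdj_cons_iff (a : ℕ) (u v : List ℕ) :
    IsTreeAdj (a :: u) (a :: v) ↔ IsTreeAdj u v := by
  simp [IsTreeAdj]

lemma isTreeAdj_modifyHead_add_iff (k : ℕ) (u v : List ℕ) :
    IsTreeAdj (u.modifyHead (· + k)) (v.modifyHead (· + k)) ↔ IsTreeAdj u v := by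
  rcases u with _ | ⟨a, u⟩ <;> rcases v with _ | ⟨b, v⟩ <;> simp [IsTreeAdj]

instance (S : Set (List ℕ)) : Std.Symm (AdjIn S) where
  symm _ _ h := ⟨h.2.1, h.1, h.2.2.symm⟩

lemma AdjIn.mono {S T : Set (List ℕ)} (hST : S ⊆ T) {u v : List ℕ} (h : AdjIn S u v) :
    AdjIn T u v :=
  ⟨hST h.1, hST h.2.1, h.2.2⟩

lemma connectedIn_singleton (r : List ℕ) : ConnectedIn {r} := by
  rintro u rfl v rfl
  exact .refl

lemma connectedIn_iff_forall_reflTransGen {S : Set (List ℕ)} {r : List ℕ} (hr : r ∈ S) :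
    ConnectedIn S ↔ ∀ u ∈ S, ReflTransGen (AdjIn S) u r :=
  ⟨fun h u hu => h u hu r hr, fun h u hu v hv => (h u hu).trans (symm (h v hv))⟩

lemma ConnectedIn.of_map {S S' : Set (List ℕ)} (f : List ℕ → List ℕ) (hS' : S' ⊆ f '' S)
    (hf : ∀ u v, AdjIn S u v → ReflTransGen (AdjIn S') (f u) (f v)) (h : ConnectedIn S) :
    ConnectedIn S' := by
  intro u' hu' v' hv'
  obtain ⟨u, hu, rfl⟩ := hS' hu'
  obtain ⟨v, hv, rfl⟩ := hS' hv'
  exact ReflTransGen.lift' f hf _ _ (h u hu v hv)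

lemma connectedIn_image_iff {φ : List ℕ → List ℕ} (hφ : φ.Injective)
    (hadj : ∀ u v, IsTreeAdj (φ u) (φ v) ↔ IsTreeAdj u v) (W : Set (List ℕ)) :
    ConnectedIn (φ '' W) ↔ ConnectedIn W := by
  have hinv := Function.leftInverse_invFun hφ
  constructor
  · refine ConnectedIn.of_map (Function.invFun φ) (fun w hw => ⟨φ w, ⟨w, hw, rfl⟩, hinv w⟩) ?_
    rintro _ _ ⟨⟨u, hu, rfl⟩, ⟨v, hv, rfl⟩, h⟩
    rw [hinv, hinv]
    exact .single ⟨hu, hv, (hadj u v).mp h⟩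
  · refine ConnectedIn.of_map φ subset_rfl fun u v ⟨hu, hv, h⟩ => ?_
    exact .single ⟨⟨u, hu, rfl⟩, ⟨v, hv, rfl⟩, (hadj u v).mpr h⟩

lemma connectedIn_insert_union_iff {A B : Set (List ℕ)} (r : List ℕ)
    (hAB : ∀ a ∈ A, ∀ b ∈ B, ¬ IsTreeAdj a b) :
    ConnectedIn (insert r (A ∪ B)) ↔ ConnectedIn (insert r A) ∧ ConnectedIn (insert r B) := by
  classical
  have hA : insert r A ⊆ insert r (A ∪ B) := Set.insert_subset_insert Set.subset_union_left
  have hB : insert r B ⊆ insert r (A ∪ B) := Set.insert_subset_insert Set.subset_union_right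
  -- retract onto `insert r X`, collapsing the other side onto `r`
  have retract : ∀ X : Set (List ℕ), insert r X ⊆ insert r (A ∪ B) →
      (∀ u v, AdjIn (insert r (A ∪ B)) u v → u ∈ insert r X → v ∉ insert r X → u = r) →
      ConnectedIn (insert r (A ∪ B)) → ConnectedIn (insert r X) := by
    intro X hX hsep
    refine ConnectedIn.of_map (fun w => if w ∈ insert r X then w else r)
      (fun w hw => ⟨w, hX hw, if_pos hw⟩) fun u v huv => ?_
    by_cases hu : u ∈ insert r X <;> by_cases hv : v ∈ insert r X <;>
      simp only [hu, hv, if_true, if_false]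
    · exact .single ⟨hu, hv, huv.2.2⟩
    · rw [hsep u v huv hu hv]
    · rw [hsep v u (symm huv) hv hu]
    · exact .refl
  constructor
  · intro h
    refine ⟨retract A hA ?_ h, retract B hB ?_ h⟩ <;>
      rintro u v ⟨-, hv, huv⟩ (rfl | hu) hv' <;> try rfl
    · exact absurd huv (hAB u hu v (by simp_all))
    · exact absurd huv.symm (hAB v (by simp_all) u hu)
  · rintro ⟨h₁, h₂⟩
    rw [connectedIn_iff_forall_reflTransGen (Set.mem_insert r _)]
    rintro u (rfl | hu | hu)
    · exact .refl
    · exact ReflTransGen.mono (fun _ _ => AdjIn.mono hA) _ _ (h₁ u (Or.inr hu) r (Or.inl rfl))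
    · exact ReflTransGen.mono (fun _ _ => AdjIn.mono hB) _ _ (h₂ u (Or.inr hu) r (Or.inl rfl))

lemma connectedIn_insert_leaf_iff {X : Set (List ℕ)} {r s : List ℕ} (hr : r ∉ X) (hs : s ∈ X)
    (hrs : IsTreeAdj r s) (hleaf : ∀ v ∈ X, IsTreeAdj r v → v = s) :
    ConnectedIn (insert r X) ↔ ConnectedIn X := by
  constructor
  · refine ConnectedIn.of_map (fun w => if w = r then s else w)
      (fun w hw => ⟨w, Or.inr hw, if_neg fun h : w = r => hr (h ▸ hw)⟩)
      fun u v ⟨hu, hv, huv⟩ => ?_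
    by_cases hur : u = r <;> by_cases hvr : v = r <;> simp only [hur, hvr, if_true, if_false]
    · exact .refl
    · subst hur; rw [hleaf v (hv.resolve_left hvr) huv]
    · subst hvr; rw [hleaf u (hu.resolve_left hur) huv.symm]
    · exact .single ⟨hu.resolve_left hur, hv.resolve_left hvr, huv⟩
  · intro h
    rw [connectedIn_iff_forall_reflTransGen (Set.mem_insert_of_mem r hs)]
    rintro u (rfl | hu)
    · exact .single ⟨Set.mem_insert _ _, Set.mem_insert_of_mem _ hs, hrs⟩
    · exact ReflTransGen.mono (fun _ _ => AdjIn.mono (Set.subset_insert _ X)) _ _ (h u hu s hs)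

lemma not_connectedIn_insert_of_isolated {X : Set (List ℕ)} {r v : List ℕ} (hv : v ∈ X)
    (hvr : v ≠ r) (hiso : ∀ w ∈ X, ¬ IsTreeAdj r w) : ¬ ConnectedIn (insert r X) := by
  intro h
  rcases (h r (Set.mem_insert _ _) v (Or.inr hv)).cases_head with h | ⟨w, ⟨-, hw, hrw⟩, -⟩
  · exact hvr h.symm
  · rcases hw with rfl | hw
    · exact not_isTreeAdj_self w hrw
    · exact hiso w hw hrw

lemma connectedIn_insert_nil_image_cons_iff {V : Set (List ℕ)} (hV : [] ∈ V) :
    ConnectedIn (insert [] ((0 :: ·) '' V)) ↔ ConnectedIn V := by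
  rw [connectedIn_insert_leaf_iff (X := (0 :: ·) '' V) (s := [0]) (by simp) ⟨[], hV, rfl⟩
    (Or.inl ⟨0, rfl⟩) ?_, connectedIn_image_iff List.cons_injective (isTreeAdj_cons_iff 0)]
  rintro _ ⟨w, -, rfl⟩ h
  obtain ⟨i, hi⟩ := isTreeAdj_nil_iff.mp h
  simp only [List.cons.injEq] at hi
  rw [hi.2]

lemma connectedIn_insert_nil_union_image_iff {k : ℕ} {S₁ S₂ : Finset (List ℕ)}
    (hS₁ : ∀ p ∈ S₁, ∃ j q, p = j :: q ∧ j < k) (hS₂ : [] ∉ S₂) :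
    ConnectedIn ↑(insert [] (S₁ ∪ S₂.image (List.modifyHead (· + k)))) ↔
      ConnectedIn ↑(insert [] S₁) ∧ ConnectedIn ↑(insert [] S₂) := by
  have himage : insert [] (List.modifyHead (· + k) '' ↑S₂) =
      List.modifyHead (· + k) '' insert [] ↑S₂ := by
    rw [Set.image_insert_eq, List.modifyHead_nil]
  simp only [Finset.coe_insert, Finset.coe_union, Finset.coe_image]
  rw [connectedIn_insert_union_iff, himage,
    connectedIn_image_iff (List.modifyHead_add_injective k) (isTreeAdj_modifyHead_add_iff k)]
  rintro a ha _ ⟨_ | ⟨l, r⟩, hr, rfl⟩ hadj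
  · exact hS₂ hr
  · obtain ⟨j, q, rfl, hj⟩ := hS₁ a ha
    have := hadj.head_eq
    dsimp only at this
    omega

end Connectivity

namespace LDT

-- The position `j :: p` of `t₂` becomes `(j + t₁.children.length) :: p` in the merged tree,
-- hence the shifts `List.modifyHead (· + k)` below.
def mergeRoots (t₁ t₂ : LDT) : LDT :=
  .node (t₁.label * t₂.label) (t₁.children ++ t₂.children)

@[simp] lemma children_node (n : ℕ) (cs : List (ℕ × LDT)) : (node n cs).children = cs := rfl

@[simp] lemma children_mergeRoots (t₁ t₂ : LDT) :
    (t₁.mergeRoots t₂).children = t₁.children ++ t₂.children := rfl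

lemma sub?_cons (t : LDT) (i : ℕ) (p : List ℕ) :
    t.sub? (i :: p) = t.children[i]?.bind (·.2.sub? p) := by
  cases h : t.children[i]? <;> simp [LDT.sub?, h]

lemma labelAt_nil (t : LDT) : t.labelAt [] = t.label := rfl

lemma labelAt_cons (t : LDT) (i : ℕ) (p : List ℕ) :
    t.labelAt (i :: p) = (t.children[i]?.map (·.2.labelAt p)).getD 1 := by
  rw [labelAt, sub?_cons]
  cases t.children[i]? <;> rfl

lemma edgeLabelAt_cons (t : LDT) (i : ℕ) (p : List ℕ) :
    t.edgeLabelAt (i :: p) =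
      (t.children[i]?.map fun c => if p = [] then c.1 else c.2.edgeLabelAt p).getD 1 := by
  rcases p with _ | ⟨j, p⟩
  · simp only [edgeLabelAt, List.dropLast_singleton, List.getLast?_singleton, sub?,
      Option.bind_some, Option.getD_some, if_true]
  · simp only [edgeLabelAt, List.dropLast_cons_cons, sub?_cons, List.getLast?_cons_cons,
      reduceCtorEq, if_false]
    cases t.children[i]? <;> rfl

lemma labelAt_mergeRoots_cons (t₁ t₂ : LDT) (i : ℕ) (p : List ℕ) :
    (t₁.mergeRoots t₂).labelAt (i :: p) =
      if i < t₁.children.length then t₁.labelAt (i :: p)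
      else t₂.labelAt ((i - t₁.children.length) :: p) := by
  split_ifs with h
  · simp [labelAt_cons, List.getElem?_append_left h]
  · simp [labelAt_cons, List.getElem?_append_right (not_lt.mp h)]

lemma edgeLabelAt_mergeRoots_cons (t₁ t₂ : LDT) (i : ℕ) (p : List ℕ) :
    (t₁.mergeRoots t₂).edgeLabelAt (i :: p) =
      if i < t₁.children.length then t₁.edgeLabelAt (i :: p)
      else t₂.edgeLabelAt ((i - t₁.children.length) :: p) := by
  split_ifs with h
  · simp [edgeLabelAt_cons, List.getElem?_append_left h]
  · simp [edgeLabelAt_cons, List.getElem?_append_right (not_lt.mp h)]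

lemma labelAt_mergeRoots_modifyHead (t₁ t₂ : LDT) {p : List ℕ} (hp : p ≠ []) :
    (t₁.mergeRoots t₂).labelAt (p.modifyHead (· + t₁.children.length)) = t₂.labelAt p := by
  obtain ⟨j, q, rfl⟩ := List.exists_cons_of_ne_nil hp
  simp [labelAt_mergeRoots_cons]

lemma edgeLabelAt_mergeRoots_modifyHead (t₁ t₂ : LDT) {p : List ℕ} (hp : p ≠ []) :
    (t₁.mergeRoots t₂).edgeLabelAt (p.modifyHead (· + t₁.children.length)) =
      t₂.edgeLabelAt p := by
  obtain ⟨j, q, rfl⟩ := List.exists_cons_of_ne_nil hp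
  simp [edgeLabelAt_mergeRoots_cons]

lemma labelAt_node_singleton (n c : ℕ) (t : LDT) (p : List ℕ) :
    (node n [(c, t)]).labelAt (0 :: p) = t.labelAt p := by
  simp [labelAt_cons]

lemma edgeLabelAt_node_singleton (n c : ℕ) (t : LDT) (p : List ℕ) :
    (node n [(c, t)]).edgeLabelAt (0 :: p) = if p = [] then c else t.edgeLabelAt p := by
  simp [edgeLabelAt_cons]

lemma mem_positionsAux {q : List ℕ} {cs : List (ℕ × LDT)} {i : ℕ}
    (h : q ∈ positionsAux i cs) : ∃ j p, q = j :: p ∧ i ≤ j ∧ j < i + cs.length := by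
  induction cs generalizing i with
  | nil => simp [positionsAux] at h
  | cons c cs ih =>
    simp only [positionsAux, List.mem_append, List.mem_map] at h
    rcases h with ⟨p, -, rfl⟩ | h
    · exact ⟨i, p, rfl, le_rfl, by simp⟩
    · obtain ⟨j, p, rfl, h₁, h₂⟩ := ih h
      exact ⟨j, p, rfl, by omega, by simp; omega⟩

lemma positionsAux_append (cs₁ cs₂ : List (ℕ × LDT)) (i : ℕ) :
    positionsAux i (cs₁ ++ cs₂) = positionsAux i cs₁ ++ positionsAux (i + cs₁.length) cs₂ := by
  induction cs₁ generalizing i with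
  | nil => simp [positionsAux]
  | cons c cs ih =>
    simp only [List.cons_append, positionsAux, ih, List.append_assoc, List.length_cons]
    rw [Nat.add_right_comm, Nat.add_assoc]

lemma positionsAux_add (cs : List (ℕ × LDT)) (i k : ℕ) :
    positionsAux (i + k) cs = (positionsAux i cs).map (List.modifyHead (· + k)) := by
  induction cs generalizing i with
  | nil => simp [positionsAux]
  | cons c cs ih =>
    simp only [positionsAux, List.map_append, List.map_map, Nat.add_right_comm i k 1, ih]
    rfl

lemma edgeFinset_node (n : ℕ) (cs : List (ℕ × LDT)) :
    (node n cs).edgeFinset = (positionsAux 0 cs).toFinset := by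
  rw [edgeFinset, positions, List.toFinset_cons]
  refine Finset.erase_insert fun h => ?_
  obtain ⟨j, p, hjp, -⟩ := mem_positionsAux (List.mem_toFinset.mp h)
  exact List.cons_ne_nil j p hjp.symm

lemma vertFinset_eq_insert_edgeFinset (t : LDT) : t.vertFinset = insert [] t.edgeFinset := by
  cases t with
  | node n cs => rw [edgeFinset_node, vertFinset, positions, List.toFinset_cons]

lemma exists_cons_of_mem_edgeFinset {t : LDT} {q : List ℕ} (h : q ∈ t.edgeFinset) :
    ∃ j p, q = j :: p ∧ j < t.children.length := by
  cases t with
  | node n cs =>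
    rw [edgeFinset_node] at h
    obtain ⟨j, p, rfl, -, hj⟩ := mem_positionsAux (List.mem_toFinset.mp h)
    exact ⟨j, p, rfl, by simpa using hj⟩

lemma nil_notMem_edgeFinset (t : LDT) : [] ∉ t.edgeFinset := fun h =>
  (exists_cons_of_mem_edgeFinset h).elim fun _ h => by simp at h

lemma edgeFinset_node_nil (n : ℕ) : (node n []).edgeFinset = ∅ := by
  rw [edgeFinset_node]; rfl

lemma edgeFinset_node_singleton (n c : ℕ) (t : LDT) :
    (node n [(c, t)]).edgeFinset = t.vertFinset.image (0 :: ·) := by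
  ext q
  simp [edgeFinset_node, positionsAux, vertFinset]

lemma edgeFinset_mergeRoots (t₁ t₂ : LDT) :
    (t₁.mergeRoots t₂).edgeFinset =
      t₁.edgeFinset ∪ t₂.edgeFinset.image (List.modifyHead (· + t₁.children.length)) := by
  cases t₁; cases t₂
  simp only [mergeRoots, children_node, edgeFinset_node, positionsAux_append, positionsAux_add]
  ext q
  simp

def boundaryFactor (t : LDT) (U : Finset (List ℕ)) (q : List ℕ) : ℤ :=
  if Xor (q ∈ U) (q.dropLast ∈ U) then (t.edgeLabelAt q : ℤ) else 1

def weight (t : LDT) (U : Finset (List ℕ)) : ℤ :=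
  (∏ p ∈ U, (t.labelAt p : ℤ)) * ∏ q ∈ t.edgeFinset, t.boundaryFactor U q

lemma boundaryFactor_congr {t t' : LDT} {U U' : Finset (List ℕ)} {q q' : List ℕ}
    (hq : q ∈ U ↔ q' ∈ U') (hd : q.dropLast ∈ U ↔ q'.dropLast ∈ U')
    (hl : t.edgeLabelAt q = t'.edgeLabelAt q') :
    t.boundaryFactor U q = t'.boundaryFactor U' q' := by
  simp only [boundaryFactor, hq, hd, hl]

lemma boundaryFactor_of_mem {t : LDT} {U : Finset (List ℕ)} {q : List ℕ} (hq : q ∈ U)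
    (hd : q.dropLast ∈ U) : t.boundaryFactor U q = 1 := by
  simp [boundaryFactor, hq, hd]

lemma boundaryFactor_of_notMem {t : LDT} {U : Finset (List ℕ)} {q : List ℕ} (hq : q ∉ U)
    (hd : q.dropLast ∉ U) : t.boundaryFactor U q = 1 := by
  simp [boundaryFactor, hq, hd]

lemma weight_ne_zero {t : LDT} (hl : ∀ p, 0 < t.labelAt p)
    (he : ∀ i p, 0 < t.edgeLabelAt (i :: p)) (U : Finset (List ℕ)) : t.weight U ≠ 0 := by
  refine mul_ne_zero (Finset.prod_ne_zero_iff.mpr fun p _ => by exact_mod_cast (hl p).ne')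
    (Finset.prod_ne_zero_iff.mpr fun q hq => ?_)
  obtain ⟨i, p, rfl, -⟩ := exists_cons_of_mem_edgeFinset hq
  unfold boundaryFactor
  split_ifs
  · exact_mod_cast (he i p).ne'
  · exact one_ne_zero

lemma weight_node_nil (n : ℕ) : (node n []).weight {[]} = n := by
  simp [weight, edgeFinset_node_nil, labelAt_nil, label]

lemma weight_node_singleton_root (c : ℕ) (t : LDT) : (node 1 [(c, t)]).weight {[]} = c := by
  rw [weight, Finset.prod_singleton, labelAt_nil, edgeFinset_node_singleton,
    Finset.prod_image List.cons_injective.injOn, vertFinset_eq_insert_edgeFinset,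
    Finset.prod_insert t.nil_notMem_edgeFinset]
  have hroot : (node 1 [(c, t)]).boundaryFactor {[]} [0] = c := by
    simp [boundaryFactor, edgeLabelAt_node_singleton]
  rw [hroot, Finset.prod_eq_one fun q hq => boundaryFactor_of_notMem (by simp) ?_]
  · simp [label]
  · obtain ⟨j, p, rfl, -⟩ := exists_cons_of_mem_edgeFinset hq
    simp

lemma weight_node_singleton_image (c : ℕ) (t : LDT) {V : Finset (List ℕ)} (hV : [] ∈ V) :
    (node 1 [(c, t)]).weight (insert [] (V.image (0 :: ·))) = t.weight V := by
  have hmem : ∀ q, 0 :: q ∈ insert [] (V.image (0 :: ·)) ↔ q ∈ V := by simp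
  have hlabels : ∏ p ∈ insert [] (V.image (0 :: ·)), ((node 1 [(c, t)]).labelAt p : ℤ) =
      ∏ p ∈ V, (t.labelAt p : ℤ) := by
    rw [Finset.prod_insert (by simp), Finset.prod_image List.cons_injective.injOn]
    simp [labelAt_nil, label, labelAt_node_singleton]
  have hedges : ∏ q ∈ (node 1 [(c, t)]).edgeFinset,
      (node 1 [(c, t)]).boundaryFactor (insert [] (V.image (0 :: ·))) q =
      ∏ q ∈ t.edgeFinset, t.boundaryFactor V q := by
    rw [edgeFinset_node_singleton, Finset.prod_image List.cons_injective.injOn,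
      vertFinset_eq_insert_edgeFinset, Finset.prod_insert t.nil_notMem_edgeFinset,
      boundaryFactor_of_mem ((hmem []).mpr hV) (by simp), one_mul]
    refine Finset.prod_congr rfl fun q hq => ?_
    obtain ⟨j, p, rfl, -⟩ := exists_cons_of_mem_edgeFinset hq
    refine boundaryFactor_congr (hmem _) ?_ ?_
    · rw [List.dropLast_cons_of_ne_nil (List.cons_ne_nil j p), hmem]
    · rw [edgeLabelAt_node_singleton, if_neg (List.cons_ne_nil j p)]
  rw [weight, weight, hlabels, hedges]

lemma prod_labelAt_mergeRoots (t₁ t₂ : LDT) {S₁ S₂ : Finset (List ℕ)}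
    (hS₁ : ∀ p ∈ S₁, ∃ j q, p = j :: q ∧ j < t₁.children.length) (hS₂ : [] ∉ S₂) :
    ∏ p ∈ insert [] (S₁ ∪ S₂.image (List.modifyHead (· + t₁.children.length))),
        ((t₁.mergeRoots t₂).labelAt p : ℤ) =
      (∏ p ∈ insert [] S₁, (t₁.labelAt p : ℤ)) * ∏ p ∈ insert [] S₂, (t₂.labelAt p : ℤ) := by
  have hS₁nil : [] ∉ S₁ := fun h => (hS₁ [] h).elim fun _ h => by simp at h
  have e₁ : ∀ p ∈ S₁, (t₁.mergeRoots t₂).labelAt p = t₁.labelAt p := fun p hp => by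
    obtain ⟨j, q, rfl, hj⟩ := hS₁ p hp
    rw [labelAt_mergeRoots_cons, if_pos hj]
  have e₂ : ∀ p ∈ S₂, (t₁.mergeRoots t₂).labelAt (p.modifyHead (· + t₁.children.length)) =
      t₂.labelAt p :=
    fun p hp => labelAt_mergeRoots_modifyHead t₁ t₂ (ne_of_mem_of_not_mem hp hS₂)
  rw [Finset.prod_insert (by simp [hS₁nil, hS₂]),
    Finset.prod_union (disjoint_image_modifyHead_add hS₁ hS₂),
    Finset.prod_image (List.modifyHead_add_injective _).injOn, Finset.prod_insert hS₁nil,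
    Finset.prod_insert hS₂, Finset.prod_congr rfl fun p hp => congrArg Nat.cast (e₁ p hp),
    Finset.prod_congr rfl fun p hp => congrArg Nat.cast (e₂ p hp)]
  simp only [labelAt_nil, mergeRoots, label, Nat.cast_mul]
  ring

lemma prod_boundaryFactor_mergeRoots (t₁ t₂ : LDT) {S₁ S₂ : Finset (List ℕ)}
    (hS₁ : ∀ p ∈ S₁, ∃ j q, p = j :: q ∧ j < t₁.children.length) (hS₂ : [] ∉ S₂) :
    ∏ q ∈ (t₁.mergeRoots t₂).edgeFinset, (t₁.mergeRoots t₂).boundaryFactor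
        (insert [] (S₁ ∪ S₂.image (List.modifyHead (· + t₁.children.length)))) q =
      (∏ q ∈ t₁.edgeFinset, t₁.boundaryFactor (insert [] S₁) q) *
        ∏ q ∈ t₂.edgeFinset, t₂.boundaryFactor (insert [] S₂) q := by
  rw [edgeFinset_mergeRoots, Finset.prod_union (disjoint_image_modifyHead_add
      (fun q hq => exists_cons_of_mem_edgeFinset hq) t₂.nil_notMem_edgeFinset),
    Finset.prod_image (List.modifyHead_add_injective _).injOn]
  congr 1
  · refine Finset.prod_congr rfl fun q hq => ?_
    obtain ⟨j, p, rfl, hj⟩ := exists_cons_of_mem_edgeFinset hq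
    refine boundaryFactor_congr (mem_insert_nil_union_image_iff hS₂ (by simpa))
      (mem_insert_nil_union_image_iff hS₂ ?_) ?_
    · rcases p with _ | ⟨a, p⟩ <;> simp [hj]
    · rw [edgeLabelAt_mergeRoots_cons, if_pos hj]
  · refine Finset.prod_congr rfl fun q hq => ?_
    refine boundaryFactor_congr (modifyHead_mem_insert_nil_union_image_iff hS₁ q) ?_
      (edgeLabelAt_mergeRoots_modifyHead t₁ t₂ (ne_of_mem_of_not_mem hq t₂.nil_notMem_edgeFinset))
    rw [← List.modifyHead_dropLast, modifyHead_mem_insert_nil_union_image_iff hS₁]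

lemma weight_mergeRoots (t₁ t₂ : LDT) {S₁ S₂ : Finset (List ℕ)}
    (hS₁ : ∀ p ∈ S₁, ∃ j q, p = j :: q ∧ j < t₁.children.length) (hS₂ : [] ∉ S₂) :
    (t₁.mergeRoots t₂).weight
        (insert [] (S₁ ∪ S₂.image (List.modifyHead (· + t₁.children.length)))) =
      t₁.weight (insert [] S₁) * t₂.weight (insert [] S₂) := by
  rw [weight, weight, weight, prod_labelAt_mergeRoots t₁ t₂ hS₁ hS₂,
    prod_boundaryFactor_mergeRoots t₁ t₂ hS₁ hS₂]
  ring

end LDT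

namespace LDE

lemma tree_mul (E₁ E₂ : LDE) : (mul E₁ E₂).tree = E₁.tree.mergeRoots E₂.tree := rfl

lemma varAt_nil (E : LDE) : E.varAt [] = none := by
  cases E <;> rfl

lemma varAt_step_cons (E : LDE) (x c i : ℕ) (p : List ℕ) :
    (step E x c).varAt (i :: p) =
      if i = 0 then (if p = [] then some x else E.varAt p) else none := by
  cases i <;> rfl

lemma varAt_mul_cons (E₁ E₂ : LDE) (i : ℕ) (p : List ℕ) :
    (mul E₁ E₂).varAt (i :: p) =
      if i < E₁.tree.children.length then E₁.varAt (i :: p)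
      else E₂.varAt ((i - E₁.tree.children.length) :: p) := rfl

lemma varAt_mem_vars {E : LDE} {p : List ℕ} {y : ℕ} (h : E.varAt p = some y) : y ∈ E.vars := by
  induction E generalizing p with
  | const n => simp [varAt] at h
  | mul E₁ E₂ ih₁ ih₂ =>
    rcases p with _ | ⟨i, p⟩
    · simp [varAt_nil] at h
    rw [varAt_mul_cons] at h
    split_ifs at h
    · exact Finset.mem_union_left _ (ih₁ h)
    · exact Finset.mem_union_right _ (ih₂ h)
  | step E x c ih =>
    rcases p with _ | ⟨i, p⟩
    · simp [varAt_nil] at h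
    rw [varAt_step_cons] at h
    split_ifs at h
    · exact Finset.mem_insert.mpr (Or.inl (Option.some_inj.mp h).symm)
    · exact Finset.mem_insert_of_mem (ih h)

lemma vars_poly_subset (E : LDE) : E.poly.vars ⊆ E.vars := by
  induction E with
  | const n => rw [poly, MvPolynomial.vars_C]; exact Finset.empty_subset _
  | mul E₁ E₂ ih₁ ih₂ => exact (MvPolynomial.vars_mul _ _).trans (Finset.union_subset_union ih₁ ih₂)
  | step E x c ih =>
    refine (MvPolynomial.vars_add_subset _ _).trans ?_
    rw [MvPolynomial.vars_C, Finset.union_empty]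
    refine (MvPolynomial.vars_mul _ _).trans ?_
    rw [MvPolynomial.vars_X, Finset.union_comm]
    exact Finset.union_subset_union (subset_refl _) ih

open Classical in
def CoeffFormulaAt (E : LDE) (S : Finset (List ℕ)) (xv : List ℕ → ℕ) : Prop :=
  MvPolynomial.coeff (∑ p ∈ S, Finsupp.single (xv p) 1) E.poly =
    if ConnectedIn ↑(insert [] S) then E.tree.weight (insert [] S) else 0

def HasCoeffFormula (E : LDE) : Prop :=
  ∀ (S : Finset (List ℕ)) (xv : List ℕ → ℕ), (∀ p ∈ S, E.varAt p = some (xv p)) →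
    E.CoeffFormulaAt S xv

lemma hasCoeffFormula_const (n : ℕ) : (const n).HasCoeffFormula := by
  intro S xv hxv
  obtain rfl : S = ∅ := Finset.eq_empty_of_forall_notMem fun p hp => by
    simpa [varAt] using hxv p hp
  rw [CoeffFormulaAt, Finset.sum_empty, poly, MvPolynomial.coeff_C, if_pos rfl, Finset.insert_empty,
    Finset.coe_singleton, if_pos (connectedIn_singleton []), tree, LDT.weight_node_nil]

lemma coeffFormulaAt_step_of_notMem {E : LDE} {x c : ℕ} (hx : x ∉ E.vars)
    {S : Finset (List ℕ)} {xv : List ℕ → ℕ}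
    (hxv : ∀ p ∈ S, (step E x c).varAt p = some (xv p)) (h0 : [0] ∉ S) :
    (step E x c).CoeffFormulaAt S xv := by
  have hS : ∀ p ∈ S, ∃ q, p = 0 :: q ∧ q ≠ [] ∧ E.varAt q = some (xv p) := by
    intro p hp
    rcases p with _ | ⟨i, q⟩
    · simpa [varAt_nil] using hxv _ hp
    have h := hxv _ hp
    rw [varAt_step_cons] at h
    split_ifs at h with hi hq
    · exact absurd (hi ▸ hq ▸ hp) h0
    · exact ⟨q, hi ▸ rfl, hq, h⟩
  have hmx : x ∉ (∑ p ∈ S, Finsupp.single (xv p) 1).support := fun h =>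
    hx (Finsupp.support_sum_single_one_subset (fun p hp => (hS p hp).elim
      fun _ hq => varAt_mem_vars hq.2.2) h)
  rw [CoeffFormulaAt, poly, MvPolynomial.coeff_add, MvPolynomial.coeff_mul_X', if_neg hmx, zero_add,
    MvPolynomial.coeff_C]
  rcases S.eq_empty_or_nonempty with rfl | ⟨p, hp⟩
  · rw [Finset.sum_empty, if_pos rfl, Finset.insert_empty, Finset.coe_singleton,
      if_pos (connectedIn_singleton []), tree, LDT.weight_node_singleton_root]
  · obtain ⟨q, rfl, hq, -⟩ := hS p hp
    have hiso : ∀ w ∈ (S : Set (List ℕ)), ¬ IsTreeAdj [] w := fun w hw hadj => by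
      obtain ⟨i, rfl⟩ := isTreeAdj_nil_iff.mp hadj
      obtain ⟨q', hq', hq'ne, -⟩ := hS _ hw
      simp only [List.cons.injEq] at hq'
      exact hq'ne hq'.2.symm
    rw [if_neg (Ne.symm (Finsupp.sum_single_one_eq_zero_iff.not.mpr
      (Finset.nonempty_iff_ne_empty.mp ⟨_, hp⟩))), Finset.coe_insert,
      if_neg (not_connectedIn_insert_of_isolated hp (List.cons_ne_nil 0 q) hiso)]

lemma coeffFormulaAt_step_of_mem {E : LDE} (hE : E.HasCoeffFormula) {x c : ℕ}
    {S : Finset (List ℕ)} {xv : List ℕ → ℕ}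
    (hxv : ∀ p ∈ S, (step E x c).varAt p = some (xv p)) (h0 : [0] ∈ S) :
    (step E x c).CoeffFormulaAt S xv := by
  set V := S.preimage (List.cons 0) List.cons_injective.injOn
  have hSV : S = V.image (0 :: ·) := by
    ext p
    refine ⟨fun hp => ?_, fun hp => ?_⟩
    · rcases p with _ | ⟨i, q⟩
      · simpa [varAt_nil] using hxv _ hp
      obtain rfl : i = 0 := by
        by_contra hi
        simpa [varAt_step_cons, hi] using hxv _ hp
      exact Finset.mem_image_of_mem _ (Finset.mem_preimage.mpr hp)
    · obtain ⟨q, hq, rfl⟩ := Finset.mem_image.mp hp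
      exact Finset.mem_preimage.mp hq
  have hV : [] ∈ V := Finset.mem_preimage.mpr h0
  have hxv' : ∀ q ∈ V.erase [], E.varAt q = some (xv (0 :: q)) := by
    intro q hq
    obtain ⟨hq, hqV⟩ := Finset.mem_erase.mp hq
    simpa [varAt_step_cons, hq] using hxv _ (Finset.mem_preimage.mp hqV)
  have hx : xv [0] = x := by simpa [varAt_step_cons] using (hxv _ h0).symm
  have hsum : ∑ p ∈ S, Finsupp.single (xv p) 1 =
      ∑ q ∈ V.erase [], Finsupp.single (xv (0 :: q)) 1 + Finsupp.single x 1 := by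
    conv_lhs => rw [hSV]
    rw [Finset.sum_image fun _ _ _ _ h => List.cons_injective h, ← Finset.sum_erase_add _ _ hV, hx]
  rw [CoeffFormulaAt, hsum, poly, MvPolynomial.coeff_add, MvPolynomial.coeff_mul_X,
    MvPolynomial.coeff_C, if_neg (fun h => by simpa using h.symm), add_zero, hE _ _ hxv',
    Finset.insert_erase hV, hSV, Finset.coe_insert, Finset.coe_image,
    connectedIn_insert_nil_image_cons_iff hV, tree, LDT.weight_node_singleton_image c E.tree hV]

lemma hasCoeffFormula_step {E : LDE} (hE : E.HasCoeffFormula) {x : ℕ} (hx : x ∉ E.vars)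
    (c : ℕ) : (step E x c).HasCoeffFormula := by
  intro S xv hxv
  by_cases h0 : [0] ∈ S
  · exact coeffFormulaAt_step_of_mem hE hxv h0
  · exact coeffFormulaAt_step_of_notMem hx hxv h0

lemma hasCoeffFormula_mul {E₁ E₂ : LDE} (hE₁ : E₁.HasCoeffFormula) (hE₂ : E₂.HasCoeffFormula)
    (hdisj : Disjoint E₁.vars E₂.vars) : (mul E₁ E₂).HasCoeffFormula := by
  intro S xv hxv
  set k := E₁.tree.children.length
  set sh : List ℕ → List ℕ := List.modifyHead (· + k)
  obtain ⟨S₁, S₂, rfl, hS₁, hS₂⟩ := exists_eq_union_image_modifyHead_add k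
    (S := S) fun h => by simpa [varAt_nil] using hxv [] h
  have hxv₁ : ∀ p ∈ S₁, E₁.varAt p = some (xv p) := fun p hp => by
    obtain ⟨j, q, rfl, hj⟩ := hS₁ p hp
    simpa [varAt_mul_cons, k, hj] using hxv _ (Finset.mem_union_left _ hp)
  have hxv₂ : ∀ p ∈ S₂, E₂.varAt p = some (xv (sh p)) := fun p hp => by
    obtain ⟨j, q, rfl⟩ := List.exists_cons_of_ne_nil (ne_of_mem_of_not_mem hp hS₂)
    simpa [varAt_mul_cons, sh, k] using
      hxv _ (Finset.mem_union_right _ (Finset.mem_image_of_mem sh hp))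
  have hsum : ∑ p ∈ S₁ ∪ S₂.image sh, Finsupp.single (xv p) 1 =
      ∑ p ∈ S₁, Finsupp.single (xv p) 1 + ∑ p ∈ S₂, Finsupp.single (xv (sh p)) 1 := by
    rw [Finset.sum_union (disjoint_image_modifyHead_add hS₁ hS₂),
      Finset.sum_image fun _ _ _ _ h => List.modifyHead_add_injective k h]
  rw [CoeffFormulaAt, hsum, poly,
    MvPolynomial.coeff_mul_of_disjoint_vars E₁.vars_poly_subset E₂.vars_poly_subset hdisj
      (Finsupp.support_sum_single_one_subset fun p hp => varAt_mem_vars (hxv₁ p hp))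
      (Finsupp.support_sum_single_one_subset fun p hp => varAt_mem_vars (hxv₂ p hp)),
    hE₁ S₁ xv hxv₁, hE₂ S₂ _ hxv₂, ite_zero_mul_ite_zero,
    connectedIn_insert_nil_union_image_iff hS₁ hS₂, tree_mul,
    LDT.weight_mergeRoots _ _ hS₁ hS₂]
  congr

theorem hasCoeffFormula {E : LDE} (hE : E.WF) : E.HasCoeffFormula := by
  induction E with
  | const n => exact hasCoeffFormula_const n
  | mul E₁ E₂ ih₁ ih₂ => exact hasCoeffFormula_mul (ih₁ hE.1) (ih₂ hE.2.1) hE.2.2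
  | step E x c ih => exact hasCoeffFormula_step (ih hE.1) hE.2.1 c

lemma labelAt_pos {E : LDE} (hE : E.WF) (p : List ℕ) : 0 < E.tree.labelAt p := by
  induction E generalizing p with
  | const n =>
    rcases p with _ | ⟨i, p⟩
    · exact hE
    · simp [tree, LDT.labelAt_cons]
  | mul E₁ E₂ ih₁ ih₂ =>
    rcases p with _ | ⟨i, p⟩
    · exact Nat.mul_pos (ih₁ hE.1 []) (ih₂ hE.2.1 [])
    · rw [tree_mul, LDT.labelAt_mergeRoots_cons]
      split_ifs
      exacts [ih₁ hE.1 _, ih₂ hE.2.1 _]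
  | step E x c ih =>
    rcases p with _ | ⟨_ | i, p⟩
    · exact Nat.one_pos
    · rw [tree, LDT.labelAt_node_singleton]
      exact ih hE.1 p
    · simp [tree, LDT.labelAt_cons]

lemma edgeLabelAt_pos {E : LDE} (hE : E.WF) (i : ℕ) (p : List ℕ) :
    0 < E.tree.edgeLabelAt (i :: p) := by
  induction E generalizing i p with
  | const n => simp [tree, LDT.edgeLabelAt_cons]
  | mul E₁ E₂ ih₁ ih₂ =>
    rw [tree_mul, LDT.edgeLabelAt_mergeRoots_cons]
    split_ifs
    exacts [ih₁ hE.1 _ _, ih₂ hE.2.1 _ _]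
  | step E x c ih =>
    rcases i with _ | i
    · rw [tree, LDT.edgeLabelAt_node_singleton]
      split_ifs with hp
      · exact hE.2.2
      · obtain ⟨j, q, rfl⟩ := List.exists_cons_of_ne_nil hp
        exact ih hE.1 j q
    · simp [tree, LDT.edgeLabelAt_cons]

end LDE

/-- For a set `S` of non-root vertices of `T(E)`, the monomial
`∏_{v ∈ S} x_v` appears in the polynomial of `E` iff the subgraph induced by
`S ∪ {root}` is a subtree (i.e. connected), in which case its coefficient is
`(∏_{v ∈ S∪{root}} w(v)) · (∏_{e : exactly one endpoint in S∪{root}} w(e))`. -/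
theorem coefficient_formula (E : LDE) (hE : E.WF) (S : Finset (List ℕ))
    (hSvert : ∀ p ∈ S, p ≠ ([] : List ℕ) ∧ E.tree.IsVert p)
    (xv : List ℕ → ℕ) (hxv : ∀ p ∈ S, E.varAt p = some (xv p)) :
    (MvPolynomial.coeff (∑ p ∈ S, Finsupp.single (xv p) 1) E.poly ≠ 0 ↔
      ConnectedIn ↑(insert ([] : List ℕ) S)) ∧
    (ConnectedIn ↑(insert ([] : List ℕ) S) →
      MvPolynomial.coeff (∑ p ∈ S, Finsupp.single (xv p) 1) E.poly =
        (∏ p ∈ insert ([] : List ℕ) S, (E.tree.labelAt p : ℤ)) *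
        ∏ q ∈ E.tree.edgeFinset,
          if Xor (q ∈ insert ([] : List ℕ) S) (q.dropLast ∈ insert ([] : List ℕ) S)
          then (E.tree.edgeLabelAt q : ℤ) else 1) := by
  have hcoeff := LDE.hasCoeffFormula hE S xv hxv
  have hweight := LDT.weight_ne_zero (LDE.labelAt_pos hE) (LDE.edgeLabelAt_pos hE) (insert [] S)
  rw [LDE.CoeffFormulaAt] at hcoeff
  rw [hcoeff]
  by_cases hconn : ConnectedIn ↑(insert ([] : List ℕ) S)
  · rw [if_pos hconn]
    exact ⟨⟨fun _ => hconn, fun _ => hweight⟩, fun _ => rfl⟩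
  · rw [if_neg hconn]
    exact ⟨⟨fun h => absurd rfl h, fun h => absurd h hconn⟩, fun h => absurd h hconn⟩
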